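/- arXiv:2603.12673 — 2 statements merged into one kernel-verified Lean document; each statement's English description precedes it below -/
import Mathlib

section
/- Let φ(x) = 1 for |x| ≤ 1 and φ(x) = (1 + (|x|-1)^4)^{-1/4} for |x| ≥ 1, defined on ℝ^n. Then for any q > 0 and any multi-index α with |α| ≥ 1, there exists a constant C > 0 such that |∂_x^α [φ(x)]^q| ≤ C [φ(x)]^{q+|α|} for all x ∈ ℝ^n. -/
open scoped BigOperators
open scoped RealInnerProductSpace

/-- The radial function `φ(x) = 1` for `|x| ≤ 1` and `φ(x) = (1+(|x|-1)^4)^{-1/4}`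
for `|x| ≥ 1`. -/
noncomputable def stmtPhi (n : ℕ) (x : EuclideanSpace ℝ (Fin n)) : ℝ :=
  if ‖x‖ ≤ 1 then 1 else (1 + (‖x‖ - 1) ^ 4) ^ (-(1 / 4 : ℝ))

/-- Iterated partial derivatives `∂_{i₁} ⋯ ∂_{i_k} f` along a list of coordinate
directions (a multi-index `α` with `|α| = k`). -/
noncomputable def partialIter {n : ℕ} :
    List (Fin n) → (EuclideanSpace ℝ (Fin n) → ℝ) → EuclideanSpace ℝ (Fin n) → ℝ
  | [], f => f
  | i :: l, f => partialIter l fun x => fderiv ℝ f x (EuclideanSpace.single i 1)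

/-! ### Auxiliary development -/

section Aux

variable {n : ℕ}

local notation "E" => EuclideanSpace ℝ (Fin n)

/-- A symbol class of functions on the exterior region `‖x‖ > 1`. A function of
class `MySym n m` decays like `φ(x)^m = (1+(‖x‖-1)^4)^{-m/4}` and its coordinate
derivatives are in class `m+1`. -/
inductive MySym (n : ℕ) : ℝ → (EuclideanSpace ℝ (Fin n) → ℝ) → Prop
  | pw (e : ℝ) : MySym n e (fun x => (1 + (‖x‖ - 1) ^ 4) ^ (-(e / 4) : ℝ))
  | coord (i : Fin n) : MySym n (-1) (fun x => x i)
  | sone : MySym n (-1) (fun x => ‖x‖ - 1)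
  | rinv : MySym n 1 (fun x => ‖x‖⁻¹)
  | const (c : ℝ) : MySym n 0 (fun _ => c)
  | zero (m : ℝ) : MySym n m (fun _ => 0)
  | add {m : ℝ} {f g : EuclideanSpace ℝ (Fin n) → ℝ} :
      MySym n m f → MySym n m g → MySym n m (fun x => f x + g x)
  | mul {m₁ m₂ : ℝ} {f g : EuclideanSpace ℝ (Fin n) → ℝ} :
      MySym n m₁ f → MySym n m₂ g → MySym n (m₁ + m₂) (fun x => f x * g x)

lemma MySym.congr_order {m m' : ℝ} {f : E → ℝ} (h : MySym n m f) (hm : m = m') :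
    MySym n m' f := hm ▸ h

lemma MySym.congr_fun' {m : ℝ} {f g : E → ℝ} (h : MySym n m f) (hfg : ∀ x, f x = g x) :
    MySym n m g := (funext hfg : f = g) ▸ h

/-- basic inequalities in the exterior region -/
lemma w_one_le {x : E} : (1:ℝ) ≤ 1 + (‖x‖ - 1) ^ 4 := by
  have h : (0:ℝ) ≤ (‖x‖ - 1) ^ 4 := by positivity
  linarith

lemma w_pos {x : E} : (0:ℝ) < 1 + (‖x‖ - 1) ^ 4 := by positivity

lemma sone_le_w {x : E} (hx : 1 < ‖x‖) :
    ‖x‖ - 1 ≤ (1 + (‖x‖ - 1) ^ 4) ^ ((1:ℝ)/4) := by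
  set s : ℝ := ‖x‖ - 1 with hs
  have hs0 : 0 ≤ s := by simp [hs]; linarith
  have hone : (1:ℝ) ≤ 1 + s ^ 4 := by
    have h : (0:ℝ) ≤ s ^ 4 := by positivity
    linarith
  rcases le_or_gt s 1 with h | h
  · calc s ≤ 1 := h
      _ ≤ (1 + s ^ 4) ^ ((1:ℝ)/4) :=
        Real.one_le_rpow hone (by norm_num)
  · have h1 : s = (s ^ (4:ℕ)) ^ ((1:ℝ)/4) := by
      rw [← Real.rpow_natCast s 4, ← Real.rpow_mul hs0]
      norm_num
    calc s = (s ^ (4:ℕ)) ^ ((1:ℝ)/4) := h1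
      _ ≤ (1 + s ^ 4) ^ ((1:ℝ)/4) := by
        apply Real.rpow_le_rpow (by positivity) (by linarith) (by norm_num)

lemma r_le_w {x : E} (hx : 1 < ‖x‖) :
    ‖x‖ ≤ 2 * (1 + (‖x‖ - 1) ^ 4) ^ ((1:ℝ)/4) := by
  have h1 : (1:ℝ) ≤ (1 + (‖x‖ - 1) ^ 4) ^ ((1:ℝ)/4) :=
    Real.one_le_rpow w_one_le (by norm_num)
  have h2 := sone_le_w hx
  linarith

lemma w_le_r {x : E} (hx : 1 < ‖x‖) :
    (1 + (‖x‖ - 1) ^ 4) ^ ((1:ℝ)/4) ≤ 2 * ‖x‖ := by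
  have h0 : (0:ℝ) < ‖x‖ := by linarith
  have h1 : 1 + (‖x‖ - 1) ^ 4 ≤ (2 * ‖x‖) ^ (4:ℕ) := by nlinarith [sq_nonneg ‖x‖, sq_nonneg (‖x‖ - 1), sq_nonneg (‖x‖ + 1), sq_nonneg (‖x‖ * ‖x‖ - 1)]
  calc (1 + (‖x‖ - 1) ^ 4) ^ ((1:ℝ)/4)
      ≤ ((2 * ‖x‖) ^ (4:ℕ)) ^ ((1:ℝ)/4) :=
        Real.rpow_le_rpow (le_of_lt w_pos) h1 (by norm_num)
    _ = 2 * ‖x‖ := by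
        rw [← Real.rpow_natCast (2 * ‖x‖) 4, ← Real.rpow_mul (by positivity)]
        norm_num

/-- Coordinate bound. -/
lemma abs_coord_le {x : E} (i : Fin n) : |x i| ≤ ‖x‖ := by
  have h := abs_real_inner_le_norm x (EuclideanSpace.single i (1:ℝ))
  rw [EuclideanSpace.inner_single_right] at h
  simpa using h

/-- The decay bound for symbols. -/
lemma mySym_bound {m : ℝ} {f : E → ℝ} (h : MySym n m f) :
    ∃ C > 0, ∀ x : E, 1 < ‖x‖ → |f x| ≤ C * (1 + (‖x‖ - 1) ^ 4) ^ (-(m / 4) : ℝ) := by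
  induction h with
  | pw e =>
      exact ⟨1, one_pos, fun x hx => by
        rw [abs_of_pos (Real.rpow_pos_of_pos w_pos _), one_mul]⟩
  | coord i =>
      refine ⟨2, by norm_num, fun x hx => ?_⟩
      have h1 := (abs_coord_le (x := x) i).trans (r_le_w hx)
      have : (-(-1 / 4) : ℝ) = (1:ℝ)/4 := by norm_num
      rw [this]; exact h1
  | sone =>
      refine ⟨1, one_pos, fun x hx => ?_⟩
      have h1 : |‖x‖ - 1| = ‖x‖ - 1 := abs_of_pos (by linarith)
      have : (-(-1 / 4) : ℝ) = (1:ℝ)/4 := by norm_num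
      rw [this, h1, one_mul]; exact sone_le_w hx
  | rinv =>
      refine ⟨2, by norm_num, fun x hx => ?_⟩
      have h0 : (0:ℝ) < ‖x‖ := by linarith
      have hwp : (0:ℝ) < (1 + (‖x‖ - 1) ^ 4) ^ ((1:ℝ)/4) := Real.rpow_pos_of_pos w_pos _
      have h1 := w_le_r hx
      have h2 : (1 + (‖x‖ - 1) ^ 4) ^ (-(1 / 4) : ℝ) = ((1 + (‖x‖ - 1) ^ 4) ^ ((1:ℝ)/4))⁻¹ := by
        rw [← Real.rpow_neg_one ((1 + (‖x‖ - 1) ^ 4) ^ ((1:ℝ)/4)), ← Real.rpow_mul (le_of_lt w_pos)]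
        norm_num
      rw [abs_of_pos (inv_pos.2 h0), h2]
      have h3 : (2*‖x‖)⁻¹ ≤ ((1 + (‖x‖ - 1) ^ 4) ^ ((1:ℝ)/4))⁻¹ :=
        (inv_le_inv₀ (by linarith) hwp).2 h1
      calc ‖x‖⁻¹ = 2 * (2*‖x‖)⁻¹ := by field_simp
        _ ≤ 2 * ((1 + (‖x‖ - 1) ^ 4) ^ ((1:ℝ)/4))⁻¹ :=
            mul_le_mul_of_nonneg_left h3 (by norm_num)
  | const c =>
      refine ⟨|c| + 1, by positivity, fun x hx => ?_⟩
      have : (-(0 / 4) : ℝ) = 0 := by norm_num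
      rw [this, Real.rpow_zero, mul_one]; linarith [abs_nonneg c]
  | zero m =>
      exact ⟨1, one_pos, fun x hx => by
        simp [le_of_lt (Real.rpow_pos_of_pos w_pos _)]⟩
  | @add m' f' g' hf hg ihf ihg =>
      obtain ⟨C₁, hC₁, H₁⟩ := ihf
      obtain ⟨C₂, hC₂, H₂⟩ := ihg
      refine ⟨C₁ + C₂, by linarith, fun x hx => ?_⟩
      calc |f' x + g' x| ≤ |f' x| + |g' x| := abs_add_le _ _
        _ ≤ C₁ * (1 + (‖x‖ - 1) ^ 4) ^ (-(m' / 4) : ℝ)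
            + C₂ * (1 + (‖x‖ - 1) ^ 4) ^ (-(m' / 4) : ℝ) := add_le_add (H₁ x hx) (H₂ x hx)
        _ = (C₁ + C₂) * (1 + (‖x‖ - 1) ^ 4) ^ (-(m' / 4) : ℝ) := by ring
  | @mul m₁ m₂ f' g' hf hg ihf ihg =>
      obtain ⟨C₁, hC₁, H₁⟩ := ihf
      obtain ⟨C₂, hC₂, H₂⟩ := ihg
      refine ⟨C₁ * C₂, by positivity, fun x hx => ?_⟩
      have hb : (0:ℝ) ≤ C₁ * (1 + (‖x‖ - 1) ^ 4) ^ (-(m₁ / 4) : ℝ) :=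
        (mul_pos hC₁ (Real.rpow_pos_of_pos w_pos _)).le
      rw [abs_mul]
      calc |f' x| * |g' x|
          ≤ (C₁ * (1 + (‖x‖ - 1) ^ 4) ^ (-(m₁ / 4) : ℝ)) *
            (C₂ * (1 + (‖x‖ - 1) ^ 4) ^ (-(m₂ / 4) : ℝ)) :=
          mul_le_mul (H₁ x hx) (H₂ x hx) (abs_nonneg _) hb
        _ = (C₁ * C₂) * ((1 + (‖x‖ - 1) ^ 4) ^ (-(m₁ / 4) : ℝ) *
            (1 + (‖x‖ - 1) ^ 4) ^ (-(m₂ / 4) : ℝ)) := by ring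
        _ = (C₁ * C₂) * (1 + (‖x‖ - 1) ^ 4) ^ (-((m₁ + m₂) / 4) : ℝ) := by
            rw [← Real.rpow_add w_pos,
              show (-(m₁/4) + -(m₂/4) : ℝ) = -((m₁+m₂)/4) from by ring]


/-- Derivative of the norm in Euclidean space. -/
lemma norm_hasFDerivAt {x : E} (hx : x ≠ 0) :
    ∃ L : E →L[ℝ] ℝ, HasFDerivAt (fun y : E => ‖y‖) L x ∧ ∀ v, L v = ⟪x, v⟫ / ‖x‖ := by
  have h1 : HasFDerivAt (fun y : E => ⟪y, y⟫) _ x :=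
    (hasFDerivAt_id x).inner ℝ (hasFDerivAt_id x)
  have hn : ‖x‖ ≠ 0 := norm_ne_zero_iff.2 hx
  have hx' : ⟪x, x⟫ ≠ 0 := by
    rw [real_inner_self_eq_norm_mul_norm]
    positivity
  have h2 := h1.sqrt hx'
  have h3 : (fun y : E => Real.sqrt ⟪y, y⟫) = fun y => ‖y‖ := by
    funext y
    rw [real_inner_self_eq_norm_mul_norm, Real.sqrt_mul_self (norm_nonneg y)]
  rw [h3] at h2
  refine ⟨_, h2, fun v => ?_⟩
  rw [ContinuousLinearMap.smul_apply]
  simp only [ContinuousLinearMap.comp_apply, ContinuousLinearMap.prod_apply, fderivInnerCLM_apply,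
    ContinuousLinearMap.coe_id', id_eq, real_inner_self_eq_norm_mul_norm]
  rw [real_inner_comm v x, Real.sqrt_mul_self (norm_nonneg x)]
  field_simp
  rw [smul_eq_mul]
  field_simp
  ring

/-- Derivative of a radial function along a coordinate direction. -/
lemma radial_hasFDerivAt {ψ : ℝ → ℝ} {d : ℝ} {x : E} (hx : 1 < ‖x‖)
    (hψ : HasDerivAt ψ d ‖x‖) (i : Fin n) :
    ∃ L : E →L[ℝ] ℝ, HasFDerivAt (fun y : E => ψ ‖y‖) L x ∧
      L (EuclideanSpace.single i 1) = d * (x i * ‖x‖⁻¹) := by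
  have hx0 : x ≠ 0 := by
    intro h
    rw [h, norm_zero] at hx
    linarith
  obtain ⟨L, hL, hLv⟩ := norm_hasFDerivAt (n := n) hx0
  refine ⟨_, hψ.comp_hasFDerivAt x hL, ?_⟩
  rw [ContinuousLinearMap.smul_apply, hLv, smul_eq_mul]
  rw [show ⟪x, EuclideanSpace.single i (1:ℝ)⟫ = x i from by
    rw [EuclideanSpace.inner_single_right]; simp]
  rw [div_eq_mul_inv]

/-- Differentiability and derivative representation for symbols. -/
lemma mySym_fderiv {m : ℝ} {f : E → ℝ} (h : MySym n m f) (i : Fin n) :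
    ∃ g : E → ℝ, MySym n (m + 1) g ∧ ∀ x : E, 1 < ‖x‖ →
      DifferentiableAt ℝ f x ∧ fderiv ℝ f x (EuclideanSpace.single i 1) = g x := by
  induction h with
  | pw e =>
      refine ⟨fun x => (-e) * ((‖x‖-1) * ((‖x‖-1) * ((‖x‖-1) * (x i *
          (‖x‖⁻¹ * (1 + (‖x‖ - 1) ^ 4) ^ (-((e+4) / 4) : ℝ)))))), ?_, fun x hx => ?_⟩
      · refine MySym.congr_order (MySym.mul (MySym.const (-e)) (MySym.mul MySym.sone
          (MySym.mul MySym.sone (MySym.mul MySym.sone (MySym.mul (MySym.coord i)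
          (MySym.mul MySym.rinv (MySym.pw (e+4)))))))) (by ring)
      · have hw0 : (1:ℝ) + (‖x‖ - 1) ^ 4 ≠ 0 := ne_of_gt w_pos
        have h1 : HasDerivAt (fun t : ℝ => 1 + (t - 1) ^ 4) (4 * (‖x‖ - 1) ^ 3) ‖x‖ := by
          have := (((hasDerivAt_id (‖x‖)).sub_const 1).pow 4).const_add (1:ℝ)
          simpa using this
        have h2 : HasDerivAt (fun y : ℝ => y ^ (-(e/4) : ℝ))
            ((-(e/4)) * (1 + (‖x‖ - 1) ^ 4) ^ ((-(e/4)) - 1 : ℝ)) (1 + (‖x‖ - 1) ^ 4) :=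
          Real.hasDerivAt_rpow_const (Or.inl hw0)
        have hψ : HasDerivAt (fun t : ℝ => (1 + (t - 1) ^ 4) ^ (-(e/4) : ℝ))
            ((-(e/4)) * (1 + (‖x‖ - 1) ^ 4) ^ ((-(e/4)) - 1 : ℝ) * (4 * (‖x‖ - 1) ^ 3)) ‖x‖ :=
          by have := h2.comp ‖x‖ h1; exact this
        obtain ⟨L, hL, hLv⟩ := radial_hasFDerivAt hx hψ i
        refine ⟨hL.differentiableAt, ?_⟩
        rw [hL.fderiv, hLv]
        rw [show ((-(e/4)) - 1 : ℝ) = -((e+4)/4) from by ring]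
        ring
  | coord j =>
      refine ⟨fun _ => if i = j then 1 else 0, ?_, fun x hx => ?_⟩
      · exact MySym.congr_order (MySym.const _) (by ring)
      · have hcoe : ⇑(EuclideanSpace.proj j : E →L[ℝ] ℝ) = fun y : E => y j := rfl
        have hL : HasFDerivAt (fun y : E => y j) (EuclideanSpace.proj j : E →L[ℝ] ℝ) x := by
          rw [← hcoe]
          exact (EuclideanSpace.proj j : E →L[ℝ] ℝ).hasFDerivAt
        refine ⟨hL.differentiableAt, ?_⟩
        rw [hL.fderiv]
        show (EuclideanSpace.single i (1:ℝ)) j = _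
        rw [EuclideanSpace.single_apply]
        simp [eq_comm]
  | sone =>
      refine ⟨fun x => x i * ‖x‖⁻¹, ?_, fun x hx => ?_⟩
      · exact MySym.congr_order (MySym.mul (MySym.coord i) MySym.rinv) (by ring)
      · have hψ : HasDerivAt (fun t : ℝ => t - 1) 1 ‖x‖ := (hasDerivAt_id _).sub_const 1
        obtain ⟨L, hL, hLv⟩ := radial_hasFDerivAt hx hψ i
        exact ⟨hL.differentiableAt, by rw [hL.fderiv, hLv, one_mul]⟩
  | rinv =>
      refine ⟨fun x => (-1 : ℝ) * (x i * (‖x‖⁻¹ * (‖x‖⁻¹ * ‖x‖⁻¹))), ?_, fun x hx => ?_⟩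
      · refine MySym.congr_order (MySym.mul (MySym.const (-1)) (MySym.mul (MySym.coord i)
          (MySym.mul MySym.rinv (MySym.mul MySym.rinv MySym.rinv)))) (by ring)
      · have hn : ‖x‖ ≠ 0 := by intro h; rw [h] at hx; linarith
        have hψ : HasDerivAt (fun t : ℝ => t⁻¹) (-(‖x‖ ^ 2)⁻¹) ‖x‖ := hasDerivAt_inv hn
        obtain ⟨L, hL, hLv⟩ := radial_hasFDerivAt hx hψ i
        refine ⟨hL.differentiableAt, ?_⟩
        rw [hL.fderiv, hLv, pow_two, mul_inv]
        ring
  | const c =>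
      refine ⟨fun _ => 0, MySym.zero _, fun x hx => ?_⟩
      refine ⟨differentiableAt_const c, ?_⟩
      rw [fderiv_fun_const]
      simp
  | zero m' =>
      refine ⟨fun _ => 0, MySym.zero _, fun x hx => ?_⟩
      refine ⟨differentiableAt_const 0, ?_⟩
      rw [show (fun _ : E => (0:ℝ)) = fun _ : E => (0:ℝ) from rfl, fderiv_fun_const]
      simp
  | @add m' f' g' hf hg ihf ihg =>
      obtain ⟨g₁, hg₁, H₁⟩ := ihf
      obtain ⟨g₂, hg₂, H₂⟩ := ihg
      refine ⟨fun x => g₁ x + g₂ x, MySym.add hg₁ hg₂, fun x hx => ?_⟩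
      obtain ⟨hd₁, he₁⟩ := H₁ x hx
      obtain ⟨hd₂, he₂⟩ := H₂ x hx
      refine ⟨hd₁.add hd₂, ?_⟩
      rw [fderiv_fun_add hd₁ hd₂, ContinuousLinearMap.add_apply, he₁, he₂]
  | @mul m₁ m₂ f' g' hf hg ihf ihg =>
      obtain ⟨g₁, hg₁, H₁⟩ := ihf
      obtain ⟨g₂, hg₂, H₂⟩ := ihg
      refine ⟨fun x => f' x * g₂ x + g' x * g₁ x, ?_, fun x hx => ?_⟩
      · exact MySym.add (MySym.congr_order (MySym.mul hf hg₂) (by ring))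
          (MySym.congr_order (MySym.mul hg hg₁) (by ring))
      · obtain ⟨hd₁, he₁⟩ := H₁ x hx
        obtain ⟨hd₂, he₂⟩ := H₂ x hx
        refine ⟨hd₁.mul hd₂, ?_⟩
        rw [fderiv_fun_mul hd₁ hd₂, ContinuousLinearMap.add_apply, ContinuousLinearMap.smul_apply,
          ContinuousLinearMap.smul_apply, he₁, he₂, smul_eq_mul, smul_eq_mul]

/-- Locality of iterated partial derivatives. -/
lemma partialIter_congr (α : List (Fin n)) {V : Set E} (hV : IsOpen V) :
    ∀ {F G : E → ℝ}, (∀ y ∈ V, F y = G y) → ∀ x ∈ V, partialIter α F x = partialIter α G x := by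
  induction α with
  | nil => intro F G hFG x hx; exact hFG x hx
  | cons i l ih =>
      intro F G hFG x hx
      show partialIter l _ x = partialIter l _ x
      refine ih (fun y hy => ?_) x hx
      have hghost : F =ᶠ[nhds y] G := Filter.eventuallyEq_of_mem (hV.mem_nhds hy) hFG
      rw [hghost.fderiv_eq]

/-- Iterated partial derivatives of the zero function vanish. -/
lemma partialIter_zero_fun : ∀ (l : List (Fin n)) (x : E), partialIter l (fun _ => (0:ℝ)) x = 0 := by
  intro l
  induction l with
  | nil => intro x; rfl
  | cons i l ih =>
      intro x
      show partialIter l _ x = 0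
      have h : (fun y : E => fderiv ℝ (fun _ : E => (0:ℝ)) y (EuclideanSpace.single i 1))
          = fun _ : E => (0:ℝ) := by
        funext y
        rw [fderiv_fun_const]
        simp
      rw [h, ih]

/-- Iterated partial derivatives (at least one) of a constant vanish. -/
lemma partialIter_const_fun (i : Fin n) (l : List (Fin n)) (c : ℝ) (x : E) :
    partialIter (i :: l) (fun _ => c) x = 0 := by
  show partialIter l _ x = 0
  have h : (fun y : E => fderiv ℝ (fun _ : E => c) y (EuclideanSpace.single i 1))
      = fun _ : E => (0:ℝ) := by
    funext y
    rw [fderiv_fun_const]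
    simp
  rw [h, partialIter_zero_fun]

/-- If a function is constant on the open unit ball, its derivative vanishes at points
of the unit sphere (in the junk-value sense of `fderiv`). -/
lemma fderiv_sphere_eq_zero {F : E → ℝ} {c : ℝ} (hF : ∀ y : E, ‖y‖ < 1 → F y = c)
    {x : E} (hx : ‖x‖ = 1) : fderiv ℝ F x = 0 := by
  by_cases hd : DifferentiableAt ℝ F x
  · -- Step 1 : `F x = c` by continuity along radii.
    have hFx : F x = c := by
      have hcont : Filter.Tendsto F (nhds x) (nhds (F x)) := hd.continuousAt
      have hpath : Filter.Tendsto (fun t : ℝ => (1 - t) • x) (nhdsWithin 0 (Set.Ioi 0)) (nhds x) := by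
        have h1 : Filter.Tendsto (fun t : ℝ => (1 - t) • x) (nhds 0) (nhds x) := by
          have : Continuous fun t : ℝ => (1 - t) • x := by continuity
          have h2 := this.tendsto 0
          simpa using h2
        exact h1.mono_left nhdsWithin_le_nhds
      have hcomp : Filter.Tendsto (fun t : ℝ => F ((1 - t) • x))
          (nhdsWithin 0 (Set.Ioi 0)) (nhds (F x)) := hcont.comp hpath
      have heq : ∀ᶠ t in nhdsWithin (0:ℝ) (Set.Ioi 0), F ((1 - t) • x) = c := by
        filter_upwards [Ioo_mem_nhdsGT_of_mem (by norm_num : (0:ℝ) ∈ Set.Ico 0 1)] with t ht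
        apply hF
        rw [norm_smul, hx, mul_one]
        obtain ⟨h1, h2⟩ := ht
        rw [Real.norm_eq_abs, abs_of_nonneg (by linarith)]
        linarith
      have hcomp' : Filter.Tendsto (fun t : ℝ => F ((1 - t) • x))
          (nhdsWithin 0 (Set.Ioi 0)) (nhds c) := by
        rw [Filter.tendsto_congr' heq]
        exact tendsto_const_nhds
      exact tendsto_nhds_unique hcomp hcomp'
    -- Step 2 : directional derivatives vanish in the open half space of inward directions.
    have key : ∀ v : E, ⟪x, v⟫ < 0 → fderiv ℝ F x v = 0 := by
      intro v hv
      have hvne : v ≠ 0 := by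
        intro h
        rw [h, inner_zero_right] at hv
        exact lt_irrefl 0 hv
      -- the curve `t ↦ x + t • v`
      have hγ : HasDerivAt (fun t : ℝ => x + t • v) v 0 := by
        have h1 : HasDerivAt (fun t : ℝ => t • v) ((1:ℝ) • v) 0 := (hasDerivAt_id 0).smul_const v
        have h2 := h1.const_add x
        simpa using h2
      have hcomp : HasDerivAt (fun t : ℝ => F (x + t • v)) (fderiv ℝ F x v) 0 := by
        have hx0 : x = x + (0:ℝ) • v := by simp
        have hFd : HasFDerivAt F (fderiv ℝ F x) (x + (0:ℝ) • v) := hx0 ▸ hd.hasFDerivAt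
        have h := hFd.comp_hasDerivAt 0 hγ
        exact h
      -- small positive `t` land in the ball
      set t₀ : ℝ := -(2 * ⟪x, v⟫) / (‖v‖ ^ 2 + 1) with ht₀
      have ht₀pos : 0 < t₀ := by
        apply div_pos (by linarith) (by positivity)
      have hball : ∀ t : ℝ, 0 < t → t < t₀ → ‖x + t • v‖ < 1 := by
        intro t ht ht'
        have hsq : ‖x + t • v‖ ^ 2 = ‖x‖ ^ 2 + 2 * ⟪x, v⟫ * t + t ^ 2 * ‖v‖ ^ 2 := by
          rw [@norm_add_sq_real]
          rw [real_inner_smul_right, norm_smul]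
          rw [Real.norm_eq_abs, abs_of_pos ht]
          ring
        have hv2 : t * ‖v‖ ^ 2 < -(2 * ⟪x, v⟫) := by
          have h1 : t * (‖v‖ ^ 2 + 1) < t₀ * (‖v‖ ^ 2 + 1) := by
            apply mul_lt_mul_of_pos_right ht' (by positivity)
          have h2 : t₀ * (‖v‖ ^ 2 + 1) = -(2 * ⟪x, v⟫) := by
            rw [ht₀]
            field_simp
          nlinarith
        have hlt : ‖x + t • v‖ ^ 2 < 1 := by
          rw [hsq, hx]
          nlinarith
        nlinarith [norm_nonneg (x + t • v)]
      -- the composed curve is constant on `[0, t₀)`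
      have heq : (fun t : ℝ => F (x + t • v)) =ᶠ[nhdsWithin 0 (Set.Ici 0)]
          (fun _ => c) := by
        filter_upwards [Ico_mem_nhdsGE_of_mem (⟨le_rfl, ht₀pos⟩ :
            (0:ℝ) ∈ Set.Ico 0 t₀)] with t ht
        rcases eq_or_lt_of_le ht.1 with h | h
        · rw [← h]
          simpa using hFx
        · exact hF _ (hball t h ht.2)
      have h1 : HasDerivWithinAt (fun t : ℝ => F (x + t • v)) (fderiv ℝ F x v)
          (Set.Ici 0) 0 := hcomp.hasDerivWithinAt
      have h2 : HasDerivWithinAt (fun t : ℝ => F (x + t • v)) 0 (Set.Ici 0) 0 := by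
        apply (hasDerivWithinAt_const (0:ℝ) (Set.Ici (0:ℝ)) c).congr_of_eventuallyEq heq
        simpa using hFx
      have huniq : UniqueDiffWithinAt ℝ (Set.Ici (0:ℝ)) 0 :=
        uniqueDiffOn_Ici 0 0 Set.self_mem_Ici
      exact huniq.eq_deriv _ h1 h2
    -- Step 3 : conclude that the whole derivative map vanishes.
    ext u
    rw [ContinuousLinearMap.zero_apply]
    set a : ℝ := ⟪x, u⟫ with ha
    set ε : ℝ := 1 / (1 + |a|) with hε
    have hεpos : 0 < ε := by positivity
    have hκ : ε * a < 1 := by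
      have h1 : ε * a ≤ ε * |a| := by
        apply mul_le_mul_of_nonneg_left (le_abs_self a) hεpos.le
      have h2 : ε * |a| < 1 := by
        rw [hε]
        rw [div_mul_eq_mul_div, div_lt_one (by positivity)]
        linarith [abs_nonneg a]
      linarith
    have hxx : ⟪x, -x⟫ < 0 := by
      rw [inner_neg_right, real_inner_self_eq_norm_mul_norm, hx]
      norm_num
    have hvv : ⟪x, -x + ε • u⟫ < 0 := by
      rw [inner_add_right, inner_neg_right, real_inner_self_eq_norm_mul_norm, hx,
        real_inner_smul_right]
      rw [← ha]
      norm_num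
      linarith
    have k1 := key _ hxx
    have k2 := key _ hvv
    rw [map_add, map_smul, k1, smul_eq_mul] at k2
    rw [zero_add] at k2
    exact (mul_eq_zero.1 k2).resolve_left (ne_of_gt hεpos)
  · exact fderiv_zero_of_not_differentiableAt hd

/-- Iterated partial derivatives at sphere points vanish for functions constant on the ball. -/
lemma partialIter_sphere : ∀ (l : List (Fin n)) (i : Fin n) (F : E → ℝ) (c : ℝ),
    (∀ y : E, ‖y‖ < 1 → F y = c) → ∀ x : E, ‖x‖ = 1 → partialIter (i :: l) F x = 0 := by
  intro l
  induction l with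
  | nil =>
      intro i F c hF x hx
      show fderiv ℝ F x (EuclideanSpace.single i 1) = 0
      rw [fderiv_sphere_eq_zero hF hx]
      rfl
  | cons j l ih =>
      intro i F c hF x hx
      show partialIter (j :: l) (fun y => fderiv ℝ F y (EuclideanSpace.single i 1)) x = 0
      apply ih j _ 0 _ x hx
      intro y hy
      have hball : IsOpen {z : E | ‖z‖ < 1} := isOpen_lt continuous_norm continuous_const
      have hev : F =ᶠ[nhds y] fun _ => c :=
        Filter.eventuallyEq_of_mem (hball.mem_nhds hy) (fun z hz => hF z hz)
      rw [hev.fderiv_eq, fderiv_fun_const]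
      rfl

/-- The key exterior estimate, by induction on the multi-index. -/
lemma partialIter_key : ∀ (α : List (Fin n)) (m : ℝ) (f F : E → ℝ), MySym n m f →
    (∀ y : E, 1 < ‖y‖ → F y = f y) →
    ∃ C > 0, ∀ x : E, 1 < ‖x‖ →
      |partialIter α F x| ≤ C * (1 + (‖x‖ - 1) ^ 4) ^ (-((m + α.length) / 4) : ℝ) := by
  intro α
  induction α with
  | nil =>
      intro m f F hf hFf
      obtain ⟨C, hC, H⟩ := mySym_bound hf
      refine ⟨C, hC, fun x hx => ?_⟩
      show |F x| ≤ _
      rw [hFf x hx]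
      have : ((m + (List.length ([] : List (Fin n)) : ℝ)) : ℝ) = m := by
        simp
      rw [this]
      exact H x hx
  | cons i l ih =>
      intro m f F hf hFf
      obtain ⟨g, hg, H⟩ := mySym_fderiv hf i
      have hU : IsOpen {z : E | 1 < ‖z‖} := isOpen_lt continuous_const continuous_norm
      have hF' : ∀ y : E, 1 < ‖y‖ → fderiv ℝ F y (EuclideanSpace.single i 1) = g y := by
        intro y hy
        have hev : F =ᶠ[nhds y] f :=
          Filter.eventuallyEq_of_mem (hU.mem_nhds hy) (fun z hz => hFf z hz)
        rw [hev.fderiv_eq]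
        exact (H y hy).2
      obtain ⟨C, hC, Hl⟩ := ih (m + 1) g (fun y => fderiv ℝ F y (EuclideanSpace.single i 1)) hg hF'
      refine ⟨C, hC, fun x hx => ?_⟩
      have h1 := Hl x hx
      have h2 : ((m + 1 + (l.length : ℝ)) : ℝ) = m + ((i :: l).length : ℝ) := by
        rw [List.length_cons]
        push_cast
        ring
      rw [h2] at h1
      exact h1

end Aux

/-- For any `q > 0` and any multi-index `α` with `|α| ≥ 1` there is `C > 0` such that
`|∂^α (φ^q)(x)| ≤ C φ(x)^{q+|α|}` for all `x`. -/
theorem stmt_0 (n : ℕ) (q : ℝ) (hq : 0 < q) (α : List (Fin n)) (hα : 1 ≤ α.length) :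
    ∃ C > 0, ∀ x : EuclideanSpace ℝ (Fin n),
      |partialIter α (fun y => stmtPhi n y ^ q) x| ≤ C * stmtPhi n x ^ (q + (α.length : ℝ)) := by
  cases α with
  | nil => simp at hα
  | cons i l =>
      set f₀ : EuclideanSpace ℝ (Fin n) → ℝ := fun y => stmtPhi n y ^ q with hf₀
      have hf₀ball : ∀ y : EuclideanSpace ℝ (Fin n), ‖y‖ < 1 → f₀ y = 1 := by
        intro y hy
        rw [hf₀]
        show stmtPhi n y ^ q = 1
        rw [stmtPhi, if_pos hy.le, Real.one_rpow]
      have hf₀U : ∀ y : EuclideanSpace ℝ (Fin n), 1 < ‖y‖ →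
          f₀ y = (1 + (‖y‖ - 1) ^ 4) ^ (-(q / 4) : ℝ) := by
        intro y hy
        rw [hf₀]
        show stmtPhi n y ^ q = _
        rw [stmtPhi, if_neg (not_le.2 hy)]
        rw [show (-(q/4) : ℝ) = (-(1/4)) * q from by ring,
          Real.rpow_mul (le_of_lt w_pos)]
      obtain ⟨C, hC, H⟩ := partialIter_key (i :: l) q _ f₀ (MySym.pw q) hf₀U
      refine ⟨C, hC, fun x => ?_⟩
      rcases lt_trichotomy ‖x‖ 1 with h | h | h
      · -- inside the open unit ball
        have hball : IsOpen {z : EuclideanSpace ℝ (Fin n) | ‖z‖ < 1} :=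
          isOpen_lt continuous_norm continuous_const
        have h0 : partialIter (i :: l) f₀ x = 0 := by
          rw [partialIter_congr (i :: l) hball (fun y hy => hf₀ball y hy) x h]
          exact partialIter_const_fun i l 1 x
        rw [h0, stmtPhi, if_pos h.le, Real.one_rpow, mul_one]
        simpa using hC.le
      · -- on the unit sphere
        have h0 : partialIter (i :: l) f₀ x = 0 := partialIter_sphere l i f₀ 1 hf₀ball x h
        rw [h0, stmtPhi, if_pos h.le, Real.one_rpow, mul_one]
        simpa using hC.le
      · -- the exterior region
        have h1 := H x h
        rw [stmtPhi, if_neg (not_le.2 h)]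
        rw [show (q + ((i :: l).length : ℝ)) = (q + ((i :: l).length : ℝ)) from rfl]
        have h2 : ((1 + (‖x‖ - 1) ^ 4) ^ (-(1/4) : ℝ)) ^ (q + ((i :: l).length : ℝ))
            = (1 + (‖x‖ - 1) ^ 4) ^ (-((q + ((i :: l).length : ℝ)) / 4) : ℝ) := by
          rw [← Real.rpow_mul (le_of_lt w_pos)]
          ring_nf
        rw [h2]
        exact h1
end

section
/- Let G : [R₀, ∞) → (0, ∞) be a C¹ increasing function, p*, q* > 1, n > 2σ with (1+q*)/(p*q*-1) = (n-2σ)/2, and suppose that for all r ≥ R₀, (C/r) (μ₁(C₀ r^{-n/2+σ}))^{q*/(q*+1)} (μ₂(C₀ r^{-n/2+σ}))^{1/(q*+1)} ≤ G'(r) / (G(r))^{q*(p*+1)/(q*+1)} for positive constants C, C₀ and positive continuous functions μ₁, μ₂ on (0, C₀ R₀^{-n/2+σ}]. Then C ∫_{R₀}^{∞} r^{-1} (μ₁(C₀ r^{-n/2+σ}))^{q*/(q*+1)} (μ₂(C₀ r^{-n/2+σ}))^{1/(q*+1)} dr ≤ ((n-2σ)/2) (G(R₀))^{-2/(n-2σ)}.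 In particular, if ∫₀^c s^{-1} (μ₁(s))^{q*/(q*+1)} (μ₂(s))^{1/(q*+1)} ds = ∞, no such G exists. -/
open MeasureTheory
open scoped ENNReal

/-- If the `C¹` increasing positive function `G` satisfies the differential inequality
`(C/r) μ₁(C₀ r^{-n/2+σ})^{q*/(q*+1)} μ₂(C₀ r^{-n/2+σ})^{1/(q*+1)} ≤ G'(r)/G(r)^{q*(p*+1)/(q*+1)}`
for `r ≥ R₀`, with `p*, q*` on the critical curve, then
`C ∫_{R₀}^∞ r⁻¹ μ₁^{q*/(q*+1)} μ₂^{1/(q*+1)} dr ≤ ((n-2σ)/2) G(R₀)^{-2/(n-2σ)}`. -/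
theorem stmt_14 (n : ℕ) (σ p q R₀ C C₀ : ℝ)
    (hσ : σ ∈ Set.Icc (0 : ℝ) (1 / 2)) (hn : 2 * σ < (n : ℝ))
    (hp : 1 < p) (hq : 1 < q)
    (hcrit : (1 + q) / (p * q - 1) = ((n : ℝ) - 2 * σ) / 2)
    (hR₀ : 0 < R₀) (hC : 0 < C) (hC₀ : 0 < C₀)
    (μ₁ μ₂ : ℝ → ℝ)
    (hμ₁ : ∀ s ∈ Set.Ioc (0 : ℝ) (C₀ * R₀ ^ (-(n : ℝ) / 2 + σ)), 0 < μ₁ s)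
    (hμ₂ : ∀ s ∈ Set.Ioc (0 : ℝ) (C₀ * R₀ ^ (-(n : ℝ) / 2 + σ)), 0 < μ₂ s)
    (hμ₁c : ContinuousOn μ₁ (Set.Ioc (0 : ℝ) (C₀ * R₀ ^ (-(n : ℝ) / 2 + σ))))
    (hμ₂c : ContinuousOn μ₂ (Set.Ioc (0 : ℝ) (C₀ * R₀ ^ (-(n : ℝ) / 2 + σ))))
    (G G' : ℝ → ℝ)
    (hGpos : ∀ r ≥ R₀, 0 < G r)
    (hGderiv : ∀ r ≥ R₀, HasDerivAt G (G' r) r)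
    (hGmono : ∀ r ≥ R₀, 0 ≤ G' r)
    (hG'cont : ContinuousOn G' (Set.Ici R₀))
    (hkey : ∀ r ≥ R₀,
      C / r * μ₁ (C₀ * r ^ (-(n : ℝ) / 2 + σ)) ^ (q / (q + 1))
          * μ₂ (C₀ * r ^ (-(n : ℝ) / 2 + σ)) ^ (1 / (q + 1))
        ≤ G' r / G r ^ (q * (p + 1) / (q + 1))) :
    ∫⁻ r in Set.Ici R₀,
        ENNReal.ofReal (C / r * μ₁ (C₀ * r ^ (-(n : ℝ) / 2 + σ)) ^ (q / (q + 1))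
          * μ₂ (C₀ * r ^ (-(n : ℝ) / 2 + σ)) ^ (1 / (q + 1)))
      ≤ ENNReal.ofReal (((n : ℝ) - 2 * σ) / 2 * G R₀ ^ (-2 / ((n : ℝ) - 2 * σ))) := by
  set e : ℝ := -(n : ℝ) / 2 + σ with he
  have hnσ : (0:ℝ) < (n : ℝ) - 2 * σ := by linarith
  have he0 : e < 0 := by simp only [he]; linarith
  have hq1 : (0:ℝ) < q + 1 := by linarith
  have hpq1 : (0:ℝ) < p * q - 1 := by nlinarith
  set β : ℝ := q * (p + 1) / (q + 1) with hβ
  have hβ1 : β - 1 = 2 / ((n : ℝ) - 2 * σ) := by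
    have h1 : (1 + q) * 2 = (p * q - 1) * (((n:ℝ) - 2*σ)) := by
      field_simp at hcrit; rw [div_eq_iff (by nlinarith : (0:ℝ) < q*p-1).ne'] at hcrit; linarith
    rw [hβ]; field_simp; nlinarith
  have hβpos : (0:ℝ) < β - 1 := by rw [hβ1]; positivity
  set f : ℝ → ℝ := fun r => C / r * μ₁ (C₀ * r ^ e) ^ (q / (q + 1))
      * μ₂ (C₀ * r ^ e) ^ (1 / (q + 1)) with hf
  set K : ℝ := ((n : ℝ) - 2 * σ) / 2 * G R₀ ^ (-2 / ((n : ℝ) - 2 * σ)) with hK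
  have hKeq : K = G R₀ ^ (1 - β) / (β - 1) := by
    rw [hK, hβ1]
    have : (1:ℝ) - β = -2 / ((n:ℝ) - 2*σ) := by rw [show (1:ℝ) - β = -(β-1) by ring, hβ1]; ring
    rw [this]; field_simp
  -- membership of C₀ * r ^ e in the domain of μ₁, μ₂
  have hmem : ∀ r ≥ R₀, C₀ * r ^ e ∈ Set.Ioc (0 : ℝ) (C₀ * R₀ ^ e) := by
    intro r hr
    have hr0 : 0 < r := lt_of_lt_of_le hR₀ hr
    refine ⟨by positivity, ?_⟩
    have := Real.rpow_le_rpow_of_nonpos hR₀ hr he0.le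
    exact mul_le_mul_of_nonneg_left this hC₀.le
  have hfnonneg : ∀ r ≥ R₀, 0 ≤ f r := by
    intro r hr
    have hr0 : 0 < r := lt_of_lt_of_le hR₀ hr
    have h1 := hμ₁ _ (hmem r hr)
    have h2 := hμ₂ _ (hmem r hr)
    have : 0 < f r := by rw [hf]; positivity
    exact this.le
  -- continuity of f on Ici R₀
  have hφcont : ContinuousOn (fun r : ℝ => C₀ * r ^ e) (Set.Ici R₀) :=
    continuousOn_const.mul (continuousOn_id.rpow_const (fun r hr => Or.inl
      (ne_of_gt (lt_of_lt_of_le hR₀ hr))))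
  have hμ₁comp : ContinuousOn (fun r => μ₁ (C₀ * r ^ e)) (Set.Ici R₀) :=
    hμ₁c.comp hφcont (fun r hr => hmem r hr)
  have hμ₂comp : ContinuousOn (fun r => μ₂ (C₀ * r ^ e)) (Set.Ici R₀) :=
    hμ₂c.comp hφcont (fun r hr => hmem r hr)
  have hfcont : ContinuousOn f (Set.Ici R₀) := by
    refine (((continuousOn_const.div continuousOn_id
      (fun r hr => ne_of_gt (lt_of_lt_of_le hR₀ hr))).mul
      (hμ₁comp.rpow_const (fun r hr => Or.inr (by positivity)))).mul
      (hμ₂comp.rpow_const (fun r hr => Or.inr (by positivity))))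
  -- continuity of G and g := G'/G^β on Ici R₀
  have hGcont : ContinuousOn G (Set.Ici R₀) := fun r hr =>
    ((hGderiv r hr).continuousAt).continuousWithinAt
  set g : ℝ → ℝ := fun r => G' r / G r ^ β with hg
  have hgcont : ContinuousOn g (Set.Ici R₀) := by
    refine hG'cont.div (hGcont.rpow_const (fun r hr => Or.inl (ne_of_gt (hGpos r hr))))
      (fun r hr => ne_of_gt (Real.rpow_pos_of_pos (hGpos r hr) β))
  -- interval bound
  have hbound : ∀ R ≥ R₀, ∫ r in R₀..R, f r ≤ K := by
    intro R hR
    have hsub : Set.uIcc R₀ R ⊆ Set.Ici R₀ := by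
      rw [Set.uIcc_of_le hR]; exact fun x hx => hx.1
    have hfint : IntervalIntegrable f volume R₀ R :=
      (hfcont.mono hsub).intervalIntegrable
    have hgint : IntervalIntegrable g volume R₀ R :=
      (hgcont.mono hsub).intervalIntegrable
    have hmono : ∫ r in R₀..R, f r ≤ ∫ r in R₀..R, g r := by
      refine intervalIntegral.integral_mono_on hR hfint hgint (fun r hr => hkey r hr.1)
    -- FTC for g
    have hderiv : ∀ x ∈ Set.uIcc R₀ R,
        HasDerivAt (fun r => -(G r ^ (1 - β)) / (β - 1)) (g x) x := by
      intro x hx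
      have hx' : R₀ ≤ x := hsub hx
      have hGx := hGpos x hx'
      have h1 : HasDerivAt (fun r => G r ^ (1 - β)) (G' x * (1 - β) * G x ^ (1 - β - 1)) x :=
        (hGderiv x hx').rpow_const (Or.inl (ne_of_gt hGx))
      have h2 : HasDerivAt (fun r => -(G r ^ (1 - β)) / (β - 1))
          (-(G' x * (1 - β) * G x ^ (1 - β - 1)) / (β - 1)) x := (h1.neg).div_const (β - 1)
      convert h2 using 1
      rw [hg, show (1:ℝ) - β - 1 = -β by ring, Real.rpow_neg hGx.le]
      field_simp
      ring
    have hcalc : ∫ r in R₀..R, g r = -(G R ^ (1 - β)) / (β - 1) - -(G R₀ ^ (1 - β)) / (β - 1) :=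
      intervalIntegral.integral_eq_sub_of_hasDerivAt hderiv hgint
    have hGR : 0 < G R ^ (1 - β) := Real.rpow_pos_of_pos (hGpos R hR) _
    calc ∫ r in R₀..R, f r ≤ ∫ r in R₀..R, g r := hmono
      _ = (G R₀ ^ (1 - β) - G R ^ (1 - β)) / (β - 1) := by rw [hcalc]; ring
      _ ≤ G R₀ ^ (1 - β) / (β - 1) := by gcongr ?_ / _; linarith
      _ = K := hKeq.symm
  -- lintegral over Icc pieces
  have hIcc : ∀ k : ℕ, ∫⁻ r in Set.Icc R₀ (R₀ + k), ENNReal.ofReal (f r)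
      ≤ ENNReal.ofReal K := by
    intro k
    have hRk : R₀ ≤ (R₀ + k : ℝ) := le_add_of_nonneg_right (Nat.cast_nonneg k)
    have hsub : Set.Icc R₀ (R₀ + k) ⊆ Set.Ici R₀ := fun x hx => hx.1
    have hint : IntegrableOn f (Set.Icc R₀ (R₀ + k)) volume :=
      (hfcont.mono hsub).integrableOn_compact isCompact_Icc
    have hnn : 0 ≤ᵐ[volume.restrict (Set.Icc R₀ (R₀ + k))] f := by
      filter_upwards [ae_restrict_mem measurableSet_Icc] with r hr
      exact hfnonneg r hr.1
    rw [← ofReal_integral_eq_lintegral_ofReal hint hnn]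
    apply ENNReal.ofReal_le_ofReal
    have : ∫ r in Set.Icc R₀ (R₀ + k), f r = ∫ r in R₀..(R₀ + k), f r := by
      rw [intervalIntegral.integral_of_le hRk, MeasureTheory.integral_Icc_eq_integral_Ioc]
    rw [this]
    exact hbound _ hRk
  -- put it together
  have hunion : Set.Ici R₀ = ⋃ k : ℕ, Set.Icc R₀ (R₀ + k) := by
    ext x
    simp only [Set.mem_Ici, Set.mem_iUnion, Set.mem_Icc]
    constructor
    · intro hx
      exact ⟨⌈x - R₀⌉₊, hx, by
        have := Nat.le_ceil (x - R₀); linarith⟩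
    · rintro ⟨k, hk, -⟩; exact hk
  rw [hunion, setLIntegral_iUnion_of_directed]
  · exact iSup_le hIcc
  · have hmono' : Monotone (fun k : ℕ => Set.Icc R₀ (R₀ + (k : ℝ))) := fun i j hij =>
      Set.Icc_subset_Icc le_rfl (by linarith [(Nat.cast_le (α := ℝ)).mpr hij])
    exact hmono'.directed_le
end
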